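/- Let C be a coalgebra over a field k. For every right C-comodule M there are natural isomorphisms of k-vector spaces N_C(M)* ≅ Hom_{C*}(M, C*) ≅ Hom^C(M, C*_ℓ^rat), where N_C(M)* is the linear dual of the Nakayama functor applied to M, Hom_{C*} denotes homomorphisms of left C*-modules, and Hom^C denotes homomorphisms of right C-comodules. -/

import Mathlib

/-!
Statement 0.  Let `C` be a coalgebra over a field `k`.  For every right `C`-comodule `M`
there are natural isomorphisms of `k`-vector spaces
  `(N_C M)^* ≅ Hom_{C*}(M, C*) ≅ Hom^C(M, C*_ℓ^rat)`,
where `N_C M = C ⊗_{C*} M` is the Nakayama functor, `Hom_{C*}` denotes homomorphisms of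
left `C*`-modules and `Hom^C` denotes homomorphisms of right `C`-comodules.

All notions are realised concretely:
* the convolution product on `C* = Module.Dual k C`;
* right `C`-comodules as vector spaces with a coassociative counital coaction;
* the left `C*`-action `f ⇀ m = m₍₀₎ ⟨f, m₍₁₎⟩` on a right comodule;
* `N_C M` as the quotient of `C ⊗[k] M` by the balancing relations of the tensor
  product over `C*` (using the right `C*`-action `c ↼ f = ⟨f, c₍₁₎⟩ c₍₂₎` on `C`);
* `Hom^C(M, C*_ℓ^rat)` as the space of left `C*`-module maps `M → C*` whose image
  consists of rational elements of `C*`; recall that right `C`-comodules form a full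
  subcategory of left `C*`-modules, so comodule maps into the rational part `C*_ℓ^rat`
  are exactly the `C*`-linear maps `M → C*` with rational image.
Naturality is stated with respect to all morphisms of right `C`-comodules.
-/

open TensorProduct

universe u

namespace Stmt0

variable {k : Type u} [Field k]

section Framework

variable {C : Type u} [AddCommGroup C] [Module k C]

/-- A right comodule structure over the coalgebra `(C, Δ, ε)`. -/
structure ComodStr (Δ : C →ₗ[k] C ⊗[k] C) (ε : C →ₗ[k] k)
    (M : Type u) [AddCommGroup M] [Module k M] where
  ρ : M →ₗ[k] M ⊗[k] C
  coassoc : (TensorProduct.assoc k M C C).toLinearMap ∘ₗ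
      (TensorProduct.map ρ LinearMap.id) ∘ₗ ρ = (TensorProduct.map LinearMap.id Δ) ∘ₗ ρ
  counit : (TensorProduct.rid k M).toLinearMap ∘ₗ
      (TensorProduct.map LinearMap.id ε) ∘ₗ ρ = LinearMap.id

variable (Δ : C →ₗ[k] C ⊗[k] C) (ε : C →ₗ[k] k)

/-- The convolution product on `C* = Module.Dual k C`. -/
noncomputable def conv (f g : Module.Dual k C) : Module.Dual k C :=
  (TensorProduct.lid k k).toLinearMap ∘ₗ (TensorProduct.map f g) ∘ₗ Δ

theorem conv_add_right (f g₁ g₂ : Module.Dual k C) :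
    conv Δ f (g₁ + g₂) = conv Δ f g₁ + conv Δ f g₂ := by
  simp [conv, TensorProduct.map_add_right, LinearMap.comp_add, LinearMap.add_comp]

theorem conv_smul_right (a : k) (f g : Module.Dual k C) :
    conv Δ f (a • g) = a • conv Δ f g := by
  simp [conv, TensorProduct.map_smul_right, LinearMap.comp_smul, LinearMap.smul_comp]

theorem conv_zero_right (f : Module.Dual k C) : conv Δ f 0 = 0 := by
  have : TensorProduct.map f (0 : Module.Dual k C) = 0 := by ext x y; simp
  simp [conv, this]

/-- The left action of `C*` on a right `C`-comodule: `f ⇀ m = m₍₀₎ ⟨f, m₍₁₎⟩`. -/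
noncomputable def lAct {M : Type u} [AddCommGroup M] [Module k M]
    {ε : C →ₗ[k] k} (s : ComodStr Δ ε M) (f : Module.Dual k C) : M →ₗ[k] M :=
  (TensorProduct.rid k M).toLinearMap ∘ₗ (TensorProduct.map LinearMap.id f) ∘ₗ s.ρ

/-- The right action of `C*` on `C` itself: `c ↼ f = ⟨f, c₍₁₎⟩ c₍₂₎`. -/
noncomputable def rAct (f : Module.Dual k C) : C →ₗ[k] C :=
  (TensorProduct.lid k C).toLinearMap ∘ₗ (TensorProduct.map f LinearMap.id) ∘ₗ Δ

/-- Morphisms of right `C`-comodules. -/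
def IsComodHom {M N : Type u} [AddCommGroup M] [Module k M] [AddCommGroup N] [Module k N]
    (s : ComodStr Δ ε M) (t : ComodStr Δ ε N) (φ : M →ₗ[k] N) : Prop :=
  (TensorProduct.map φ LinearMap.id) ∘ₗ s.ρ = t.ρ ∘ₗ φ

variable {M : Type u} [AddCommGroup M] [Module k M]

/-- The balancing relations defining `C ⊗_{C*} M` inside `C ⊗[k] M`. -/
noncomputable def relators (s : ComodStr Δ ε M) : Submodule k (C ⊗[k] M) :=
  Submodule.span k {x | ∃ (f : Module.Dual k C) (c : C) (m : M),
    x = (rAct Δ f c) ⊗ₜ[k] m - c ⊗ₜ[k] (lAct Δ s f m)}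

/-- The Nakayama functor on objects: `N_C M = C ⊗_{C*} M`. -/
noncomputable def Nak (s : ComodStr Δ ε M) : Type u :=
  (C ⊗[k] M) ⧸ relators Δ ε s

noncomputable instance (s : ComodStr Δ ε M) : AddCommGroup (Nak Δ ε s) :=
  inferInstanceAs (AddCommGroup ((C ⊗[k] M) ⧸ relators Δ ε s))

noncomputable instance (s : ComodStr Δ ε M) : Module k (Nak Δ ε s) :=
  inferInstanceAs (Module k ((C ⊗[k] M) ⧸ relators Δ ε s))

/-- A comodule morphism is `C*`-equivariant. -/
theorem equivariant_of_isComodHom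
    {N : Type u} [AddCommGroup N] [Module k N]
    {s : ComodStr Δ ε M} {t : ComodStr Δ ε N} {φ : M →ₗ[k] N}
    (hφ : IsComodHom Δ ε s t φ) (f : Module.Dual k C) (m : M) :
    φ (lAct Δ s f m) = lAct Δ t f (φ m) := by
  have h1 : ((TensorProduct.rid k N).toLinearMap ∘ₗ (TensorProduct.map LinearMap.id f)) ∘ₗ
      (TensorProduct.map φ (LinearMap.id (M := C))) =
      φ ∘ₗ ((TensorProduct.rid k M).toLinearMap ∘ₗ (TensorProduct.map LinearMap.id f)) := by
    apply TensorProduct.ext'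
    intro x c
    simp
  have h2 := congrArg (fun (g : M →ₗ[k] N ⊗[k] C) =>
      ((TensorProduct.rid k N).toLinearMap ∘ₗ (TensorProduct.map LinearMap.id f)) ∘ₗ g) hφ
  simp only [← LinearMap.comp_assoc] at h2
  rw [h1] at h2
  have := congrArg (fun g : M →ₗ[k] N => g m) h2
  simpa [lAct, LinearMap.comp_assoc] using this

/-- The map induced by a comodule morphism on Nakayama functors. -/
noncomputable def nakMap {N : Type u} [AddCommGroup N] [Module k N]
    {s : ComodStr Δ ε M} {t : ComodStr Δ ε N} (φ : M →ₗ[k] N)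
    (hφ : IsComodHom Δ ε s t φ) : Nak Δ ε s →ₗ[k] Nak Δ ε t :=
  Submodule.mapQ (relators Δ ε s) (relators Δ ε t)
    (TensorProduct.map LinearMap.id φ)
    (by
      rw [relators, Submodule.span_le]
      rintro x ⟨f, c, m, rfl⟩
      have : (TensorProduct.map (LinearMap.id (M := C)) φ)
          ((rAct Δ f c) ⊗ₜ[k] m - c ⊗ₜ[k] (lAct Δ s f m)) =
          (rAct Δ f c) ⊗ₜ[k] (φ m) - c ⊗ₜ[k] (lAct Δ t f (φ m)) := by
        simp [map_sub, equivariant_of_isComodHom Δ ε hφ f m]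
      simp only [SetLike.mem_coe, Submodule.mem_comap, this]
      exact Submodule.subset_span ⟨f, c, φ m, rfl⟩)

/-- The space `Hom_{C*}(M, C*)` of left `C*`-module maps `M → C*`. -/
noncomputable def CstarHom (s : ComodStr Δ ε M) : Submodule k (M →ₗ[k] Module.Dual k C) where
  carrier := {φ | ∀ (f : Module.Dual k C) (m : M), φ (lAct Δ s f m) = conv Δ f (φ m)}
  add_mem' := by
    intro φ ψ hφ hψ f m
    simp only [LinearMap.add_apply, hφ f m, hψ f m, conv_add_right]
  zero_mem' := by
    intro f m
    simp [conv_zero_right]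
  smul_mem' := by
    intro a φ hφ f m
    simp only [LinearMap.smul_apply, hφ f m, conv_smul_right]

/-- Rational elements of `C*` (for the left regular `C*`-module structure):
`f` is rational iff there is a finite family `(gᵢ, cᵢ)` with
`h * f = ∑ ⟨h, cᵢ⟩ gᵢ` for all `h ∈ C*`. -/
def IsRational (f : Module.Dual k C) : Prop :=
  ∃ (n : ℕ) (g : Fin n → Module.Dual k C) (c : Fin n → C),
    ∀ h : Module.Dual k C, conv Δ h f = ∑ i, h (c i) • g i

/-- `Hom^C(M, C*_ℓ^rat)`: comodule maps from `M` to the rational part of `C*`,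
realised as left `C*`-module maps `M → C*` with rational image. -/
noncomputable def RatHom (s : ComodStr Δ ε M) : Submodule k (M →ₗ[k] Module.Dual k C) where
  carrier := {φ | (∀ (f : Module.Dual k C) (m : M), φ (lAct Δ s f m) = conv Δ f (φ m)) ∧
      ∀ m : M, IsRational Δ (φ m)}
  add_mem' := by
    rintro φ ψ ⟨hφ, hφr⟩ ⟨hψ, hψr⟩
    refine ⟨fun f m => by simp only [LinearMap.add_apply, hφ f m, hψ f m, conv_add_right],
      fun m => ?_⟩
    obtain ⟨n₁, g₁, c₁, h₁⟩ := hφr m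
    obtain ⟨n₂, g₂, c₂, h₂⟩ := hψr m
    refine ⟨n₁ + n₂, Fin.append g₁ g₂, Fin.append c₁ c₂, fun h => ?_⟩
    rw [LinearMap.add_apply, conv_add_right, h₁ h, h₂ h, Fin.sum_univ_add]
    simp [Fin.append_left, Fin.append_right]
  zero_mem' := by
    refine ⟨fun f m => by simp [conv_zero_right], fun m => ?_⟩
    exact ⟨0, ![], ![], fun h => by simp [conv_zero_right]⟩
  smul_mem' := by
    rintro a φ ⟨hφ, hφr⟩
    refine ⟨fun f m => by simp only [LinearMap.smul_apply, hφ f m, conv_smul_right], fun m => ?_⟩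
    obtain ⟨n, g, c, hg⟩ := hφr m
    refine ⟨n, fun i => a • g i, c, fun h' => ?_⟩
    rw [LinearMap.smul_apply, conv_smul_right, hg h', Finset.smul_sum]
    refine Finset.sum_congr rfl fun i _ => ?_
    rw [smul_comm]

/-! A functional on `C ⊗_{C*} M` is a bilinear form on `C × M` balanced over `C*`, i.e. a map
`φ : M → C*` with `φ (f ⇀ m) (c) = φ m (c ↼ f)`; since `(f * g) c = g (c ↼ f)`, these are exactly
the `C*`-linear maps. Such a `φ` automatically has rational image: if `ρ m = ∑ xᵢ ⊗ yᵢ`, then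
`h * φ m = φ (h ⇀ m) = ∑ h yᵢ • φ xᵢ`. -/

variable {Δ : C →ₗ[k] C ⊗[k] C} {ε : C →ₗ[k] k}
variable {M : Type u} [AddCommGroup M] [Module k M]

theorem conv_apply_eq_apply_rAct (f g : Module.Dual k C) (c : C) :
    conv Δ f g c = g (rAct Δ f c) := by
  simp only [conv, rAct, LinearMap.comp_apply, LinearEquiv.coe_coe]
  induction Δ c with
  | zero => simp
  | tmul x y => simp
  | add x y hx hy => simp_all

theorem lAct_eq_sum {s : ComodStr Δ ε M} {m : M} {n : ℕ} {x : Fin n → M} {y : Fin n → C}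
    (hρ : s.ρ m = ∑ i, x i ⊗ₜ[k] y i) (f : Module.Dual k C) :
    lAct Δ s f m = ∑ i, f (y i) • x i := by
  simp [lAct, hρ]

theorem mkQ_rAct_tmul (s : ComodStr Δ ε M) (f : Module.Dual k C) (c : C) (m : M) :
    (relators Δ ε s).mkQ (rAct Δ f c ⊗ₜ[k] m) = (relators Δ ε s).mkQ (c ⊗ₜ[k] lAct Δ s f m) :=
  (Submodule.Quotient.eq _).mpr (Submodule.subset_span ⟨f, c, m, rfl⟩)

noncomputable def dualNakToHom (s : ComodStr Δ ε M) :
    Module.Dual k (Nak Δ ε s) →ₗ[k] M →ₗ[k] Module.Dual k C :=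
  (TensorProduct.lift.equiv (RingHom.id k) M C k).symm.toLinearMap ∘ₗ
    ((relators Δ ε s).mkQ ∘ₗ (TensorProduct.comm k M C).toLinearMap).dualMap

theorem dualNakToHom_apply_apply (s : ComodStr Δ ε M) (ξ : Module.Dual k (Nak Δ ε s))
    (m : M) (c : C) : dualNakToHom s ξ m c = ξ ((relators Δ ε s).mkQ (c ⊗ₜ[k] m)) :=
  rfl

theorem dualNakToHom_mem_cstarHom (s : ComodStr Δ ε M) (ξ : Module.Dual k (Nak Δ ε s)) :
    dualNakToHom s ξ ∈ CstarHom Δ ε s := fun f m => LinearMap.ext fun c => by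
  rw [dualNakToHom_apply_apply, ← mkQ_rAct_tmul, conv_apply_eq_apply_rAct,
    dualNakToHom_apply_apply]

noncomputable def cstarHomToDualNak (s : ComodStr Δ ε M) (φ : CstarHom Δ ε s) :
    Module.Dual k (Nak Δ ε s) :=
  (relators Δ ε s).liftQ (TensorProduct.lift (φ : M →ₗ[k] Module.Dual k C).flip) <| by
    rw [relators, Submodule.span_le]
    rintro _ ⟨f, c, m, rfl⟩
    simp [φ.2 f m, conv_apply_eq_apply_rAct]

noncomputable def dualNakEquiv (s : ComodStr Δ ε M) :
    Module.Dual k (Nak Δ ε s) ≃ₗ[k] CstarHom Δ ε s :=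
  { (dualNakToHom s).codRestrict _ (dualNakToHom_mem_cstarHom s) with
    invFun := cstarHomToDualNak s
    left_inv := fun _ => Submodule.linearMap_qext _ (TensorProduct.ext' fun _ _ => rfl)
    right_inv := fun _ => rfl }

theorem dualNakEquiv_naturality {N : Type u} [AddCommGroup N] [Module k N]
    {s : ComodStr Δ ε M} {t : ComodStr Δ ε N} {φ : M →ₗ[k] N} (hφ : IsComodHom Δ ε s t φ)
    (ξ : Module.Dual k (Nak Δ ε t)) :
    (dualNakEquiv s (ξ ∘ₗ nakMap Δ ε φ hφ) : M →ₗ[k] Module.Dual k C) =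
      (dualNakEquiv t ξ : N →ₗ[k] Module.Dual k C) ∘ₗ φ :=
  rfl

theorem isRational_of_mem_cstarHom {s : ComodStr Δ ε M} {φ : M →ₗ[k] Module.Dual k C}
    (hφ : φ ∈ CstarHom Δ ε s) (m : M) : IsRational Δ (φ m) := by
  obtain ⟨n, x, y, hρ⟩ := TensorProduct.exists_sum_tmul_eq (s.ρ m)
  refine ⟨n, fun i => φ (x i), y, fun h => ?_⟩
  rw [← hφ h m, lAct_eq_sum hρ]
  simp only [map_sum, map_smul]

theorem cstarHom_eq_ratHom (s : ComodStr Δ ε M) : CstarHom Δ ε s = RatHom Δ ε s :=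
  le_antisymm (fun _ hφ => ⟨hφ, isRational_of_mem_cstarHom hφ⟩) fun _ hφ => hφ.1

end Framework

/-- Lemma `Nakayama-dual`:  for a coalgebra `C` over a field `k` and
every right `C`-comodule `M` there are isomorphisms of `k`-vector spaces
`(N_C M)^* ≅ Hom_{C*}(M, C*) ≅ Hom^C(M, C*_ℓ^rat)`, natural in `M`. -/
theorem nakayama_dual_iso
    (C : Type u) [AddCommGroup C] [Module k C] [Coalgebra k C] :
    ∃ (e₁ : ∀ (M : Type u) [AddCommGroup M] [Module k M]
        (s : ComodStr (Coalgebra.comul (R := k) (A := C)) (Coalgebra.counit) M),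
          Module.Dual k (Nak Coalgebra.comul Coalgebra.counit s) ≃ₗ[k]
            CstarHom Coalgebra.comul Coalgebra.counit s)
      (e₂ : ∀ (M : Type u) [AddCommGroup M] [Module k M]
        (s : ComodStr (Coalgebra.comul (R := k) (A := C)) (Coalgebra.counit) M),
          (CstarHom Coalgebra.comul Coalgebra.counit s : Submodule k _) ≃ₗ[k]
            RatHom Coalgebra.comul Coalgebra.counit s),
      -- naturality of the first isomorphism in `M`
      (∀ (M N : Type u) [AddCommGroup M] [Module k M] [AddCommGroup N] [Module k N]
          (s : ComodStr (Coalgebra.comul (R := k) (A := C)) Coalgebra.counit M)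
          (t : ComodStr (Coalgebra.comul (R := k) (A := C)) Coalgebra.counit N)
          (φ : M →ₗ[k] N) (hφ : IsComodHom Coalgebra.comul Coalgebra.counit s t φ)
          (ξ : Module.Dual k (Nak Coalgebra.comul Coalgebra.counit t)),
        ((e₁ M s (ξ ∘ₗ nakMap Coalgebra.comul Coalgebra.counit φ hφ) :
            M →ₗ[k] Module.Dual k C))
          = ((e₁ N t ξ : N →ₗ[k] Module.Dual k C) ∘ₗ φ)) ∧
      -- the second isomorphism is (necessarily) the identity on underlying maps,
      -- in particular it is natural in `M`
      (∀ (M : Type u) [AddCommGroup M] [Module k M]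
          (s : ComodStr (Coalgebra.comul (R := k) (A := C)) Coalgebra.counit M)
          (ψ : CstarHom Coalgebra.comul Coalgebra.counit s),
        ((e₂ M s ψ : M →ₗ[k] Module.Dual k C)) = (ψ : M →ₗ[k] Module.Dual k C)) := by
  exact ⟨fun _ _ _ s => dualNakEquiv s,
    fun _ _ _ s => LinearEquiv.ofEq _ _ (cstarHom_eq_ratHom s),
    fun _ _ _ _ _ _ _ _ _ hφ ξ => dualNakEquiv_naturality hφ ξ,
    fun _ _ _ _ _ => rfl⟩

end Stmt0
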